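/- arXiv:1006.4804 — 2 statements merged into one kernel-verified Lean document; each statement's English description precedes it below -/
import Mathlib

section
/- Let X : ℝ → Matrix (Fin n) (Fin n) ℝ be continuous on [0, b]. Then the matrix-valued function ℰ(X) is differentiable on (0, b) and satisfies the matrix differential equation d/dx ℰ(X)(x) = X(x) · ℰ(X)(x), with ℰ(X)(0) = 1. -/
open MeasureTheory Matrix

/- Matrices are equipped with the elementwise sup norm. -/
attribute [local instance] Matrix.normedAddCommGroup Matrix.normedSpace

/-- Terms of the left integral series: `E_0(x) = 1`, `E_{k+1}(x) = ∫_0^x X(t) * E_k(t) dt`. -/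
noncomputable def lterm {ι : Type*} [Fintype ι] [DecidableEq ι]
    (X : ℝ → Matrix ι ι ℝ) : ℕ → ℝ → Matrix ι ι ℝ
  | 0, _ => 1
  | k + 1, x => ∫ t in (0:ℝ)..x, X t * lterm X k t

/-- The left integral series `ℰ(X)(x) = ∑_{k=0}^∞ E_k(x)`. -/
noncomputable def ES {ι : Type*} [Fintype ι] [DecidableEq ι]
    (X : ℝ → Matrix ι ι ℝ) (x : ℝ) : Matrix ι ι ℝ := ∑' k, lterm X k x

/-- Terms of the right integral series: `F_0(x) = 1`, `F_{k+1}(x) = ∫_0^x F_k(t) * X(t) dt`. -/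
noncomputable def rterm {ι : Type*} [Fintype ι] [DecidableEq ι]
    (X : ℝ → Matrix ι ι ℝ) : ℕ → ℝ → Matrix ι ι ℝ
  | 0, _ => 1
  | k + 1, x => ∫ t in (0:ℝ)..x, rterm X k t * X t

/-- The right integral series `ℱ(X)(x) = ∑_{k=0}^∞ F_k(x)`. -/
noncomputable def FS {ι : Type*} [Fintype ι] [DecidableEq ι]
    (X : ℝ → Matrix ι ι ℝ) (x : ℝ) : Matrix ι ι ℝ := ∑' k, rterm X k x

/-!
Writing `M` for a bound of `‖X‖` on `[0, b]`, induction gives `‖E_k(x)‖ ≤ (n M x)^k / k!`, the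
factor `n` coming from the entrywise sup norm. By the fundamental theorem of calculus
`E_{k+1}' = X E_k`, so on `(0, b)` both the series and its termwise derivative are dominated by
exponential series, which justifies differentiating `ℰ(X) = 1 + ∑ E_{k+1}` term by term.
-/

open Set

namespace Matrix

variable {l m n α : Type*} [Fintype l] [Fintype m] [Fintype n]

theorem norm_one_le [DecidableEq n] [NormedRing α] [NormOneClass α] :
    ‖(1 : Matrix n n α)‖ ≤ 1 := by
  refine (norm_le_iff zero_le_one).2 fun i j => ?_
  rw [one_apply]
  split_ifs <;> simp

theorem norm_mul_le_card_mul_of_le [NonUnitalNormedRing α] {A : Matrix l m α}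
    {B : Matrix m n α} {M r : ℝ} (hA : ‖A‖ ≤ M) (hB : ‖B‖ ≤ r) :
    ‖A * B‖ ≤ Fintype.card m * M * r := by
  have hM : 0 ≤ M := (norm_nonneg _).trans hA
  have hr : 0 ≤ r := (norm_nonneg _).trans hB
  refine (norm_le_iff (by positivity)).2 fun i j => ?_
  calc ‖(A * B) i j‖ ≤ ∑ k, ‖A i k * B k j‖ := by rw [mul_apply]; exact norm_sum_le _ _
    _ ≤ ∑ _k : m, M * r := by
        gcongr with k
        exact (norm_mul_le _ _).trans <| mul_le_mul
          (A.norm_entry_le_entrywise_sup_norm.trans hA)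
          (B.norm_entry_le_entrywise_sup_norm.trans hB) (norm_nonneg _) hM
    _ = Fintype.card m * M * r := by simp [mul_assoc]

end Matrix

theorem integral_mul_pow_div_factorial (K x : ℝ) (k : ℕ) :
    ∫ t in (0:ℝ)..x, K * ((K * t) ^ k / k.factorial) = (K * x) ^ (k + 1) / (k + 1).factorial := by
  have h : (fun t : ℝ => K * ((K * t) ^ k / k.factorial)) =
      fun t => K ^ (k + 1) / k.factorial * t ^ k := by
    funext t; ring
  rw [h, intervalIntegral.integral_const_mul, integral_pow, Nat.factorial_succ]
  push_cast
  field_simp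
  ring

section IntegralSeries

variable {ι : Type*} [Fintype ι] [DecidableEq ι] {X : ℝ → Matrix ι ι ℝ} {b : ℝ}

theorem ES_zero (X : ℝ → Matrix ι ι ℝ) : ES X 0 = 1 := by
  refine (tsum_eq_single 0 fun k hk => ?_).trans rfl
  obtain ⟨k, rfl⟩ := Nat.exists_eq_succ_of_ne_zero hk
  exact intervalIntegral.integral_same

theorem continuousOn_lterm (hb : 0 ≤ b) (hX : ContinuousOn X (Icc 0 b)) (k : ℕ) :
    ContinuousOn (lterm X k) (Icc 0 b) := by
  induction k with
  | zero => exact continuousOn_const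
  | succ k ih =>
    rw [← uIcc_of_le hb] at hX ih ⊢
    exact intervalIntegral.continuousOn_primitive_interval (hX.mul ih).integrableOn_uIcc

theorem norm_lterm_le {M : ℝ} (hXM : ∀ t ∈ Icc 0 b, ‖X t‖ ≤ M) (k : ℕ) :
    ∀ x ∈ Icc 0 b, ‖lterm X k x‖ ≤ (Fintype.card ι * M * x) ^ k / k.factorial := by
  induction k with
  | zero => intro x _; simpa [lterm] using Matrix.norm_one_le (n := ι) (α := ℝ)
  | succ k ih =>
    intro x ⟨hx0, hxb⟩
    rw [← integral_mul_pow_div_factorial]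
    refine intervalIntegral.norm_integral_le_of_norm_le hx0 (ae_of_all _ fun t ht => ?_)
      (Continuous.intervalIntegrable (by fun_prop) _ _)
    have ht : t ∈ Icc 0 b := ⟨ht.1.le, ht.2.trans hxb⟩
    exact Matrix.norm_mul_le_card_mul_of_le (hXM t ht) (ih t ht)

theorem norm_lterm_le_of_mem_Icc {M : ℝ} (hXM : ∀ t ∈ Icc 0 b, ‖X t‖ ≤ M) (k : ℕ)
    {x : ℝ} (hx : x ∈ Icc 0 b) :
    ‖lterm X k x‖ ≤ (Fintype.card ι * M * b) ^ k / k.factorial := by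
  have hM : 0 ≤ M := (norm_nonneg _).trans (hXM x hx)
  refine (norm_lterm_le hXM k x hx).trans ?_
  gcongr
  · exact mul_nonneg (by positivity) hx.1
  · exact hx.2

theorem hasDerivAt_lterm_succ (hX : ContinuousOn X (Icc 0 b)) (k : ℕ) {x : ℝ}
    (hx : x ∈ Ioo 0 b) : HasDerivAt (lterm X (k + 1)) (X x * lterm X k x) x := by
  have hb : 0 ≤ b := hx.1.le.trans hx.2.le
  have hf : ContinuousOn (fun t => X t * lterm X k t) (Icc 0 b) :=
    hX.mul (continuousOn_lterm hb hX k)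
  -- `Matrix` does not inherit this instance from `ι → ι → ℝ`.
  have : TopologicalSpace.PseudoMetrizableSpace (Matrix ι ι ℝ) :=
    inferInstanceAs (TopologicalSpace.PseudoMetrizableSpace (ι → ι → ℝ))
  exact intervalIntegral.integral_hasDerivAt_right
    ((hf.mono (Icc_subset_Icc le_rfl hx.2.le)).intervalIntegrable_of_Icc hx.1.le)
    ((hf.mono Ioo_subset_Icc_self).stronglyMeasurableAtFilter isOpen_Ioo x hx)
    (hf.continuousAt (Icc_mem_nhds hx.1 hx.2))

theorem hasDerivAt_ES (hX : ContinuousOn X (Icc 0 b)) {x : ℝ} (hx : x ∈ Ioo 0 b) :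
    HasDerivAt (ES X) (X x * ES X x) x := by
  obtain ⟨M, hXM⟩ := isCompact_Icc.exists_bound_of_continuousOn hX
  set K := Fintype.card ι * M
  have hE : ∀ k, ∀ y ∈ Icc 0 b, ‖lterm X k y‖ ≤ (K * b) ^ k / k.factorial :=
    fun k _ hy => norm_lterm_le_of_mem_Icc hXM k hy
  have hsum : ∀ y ∈ Icc 0 b, Summable fun k => lterm X k y := fun y hy =>
    .of_norm_bounded (Real.summable_pow_div_factorial _) fun k => hE k y hy
  have hxI : x ∈ Icc 0 b := Ioo_subset_Icc_self hx
  have htail : HasDerivAt (fun y => ∑' k, lterm X (k + 1) y) (∑' k, X x * lterm X k x) x :=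
    hasDerivAt_tsum_of_isPreconnected ((Real.summable_pow_div_factorial (K * b)).mul_left K)
      isOpen_Ioo isPreconnected_Ioo (fun k _ hy => hasDerivAt_lterm_succ hX k hy)
      (fun k y hy => Matrix.norm_mul_le_card_mul_of_le (hXM y (Ioo_subset_Icc_self hy))
        (hE k y (Ioo_subset_Icc_self hy)))
      hx ((summable_nat_add_iff 1).2 (hsum x hxI)) hx
  have hES : (fun y => 1 + ∑' k, lterm X (k + 1) y) =ᶠ[nhds x] ES X := by
    filter_upwards [Ioo_mem_nhds hx.1 hx.2] with y hy
    exact ((hsum y (Ioo_subset_Icc_self hy)).tsum_eq_zero_add).symm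
  rw [ES, ← (hsum x hxI).tsum_mul_left]
  exact (htail.const_add 1).congr_of_eventuallyEq hES.symm

end IntegralSeries

/-- `ℰ(X)` solves `d/dx ℰ(X)(x) = X(x) * ℰ(X)(x)`, `ℰ(X)(0) = 1`. -/
theorem ES_hasDerivAt {n : ℕ} (b : ℝ) (X : ℝ → Matrix (Fin n) (Fin n) ℝ)
    (hX : ContinuousOn X (Set.Icc 0 b)) :
    (∀ x ∈ Set.Ioo (0:ℝ) b, HasDerivAt (ES X) (X x * ES X x) x) ∧ ES X 0 = 1 :=
  ⟨fun _ hx => hasDerivAt_ES hX hx, ES_zero X⟩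
end

section
/- Let X : ℝ → Matrix (Fin n) (Fin n) ℝ be continuous on [0, b]. Then for every x ∈ [0, b], ℱ(X)(x) · ℰ(−X)(x) = 1 and ℰ(−X)(x) · ℱ(X)(x) = 1; that is, ℰ(−X)(x) is the two-sided inverse of ℱ(X)(x). -/
open MeasureTheory Matrix

/- Matrices are equipped with the elementwise sup norm. -/
attribute [local instance] Matrix.normedAddCommGroup Matrix.normedSpace

/-! With `E = ℰ(-X)`, the terms satisfy `F_{i+1}' = F_i X` and `E_{j+1}' = -X E_j`, so in every
Cauchy coefficient `∑_{i+j=k} F_i E_j` with `k ≥ 1` the two product-rule contributions `F_i X E_j`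
and `-F_i X E_j` cancel: the coefficient is constant, equal to its value `0` at `0`. Both series
converge absolutely by the Picard bound `‖F_k(x)‖ ≤ ‖1‖ (n C x)^k / k!`, where `C` bounds `‖X‖` on
`[0, x]` and `n` enters through `‖A B‖ ≤ n ‖A‖ ‖B‖` for the entrywise sup norm. Hence their product
is the sum of the Cauchy coefficients, which is `1`; a one-sided inverse of a square matrix is two-sided.
The terms on `[0, b]` only see `X` on `[0, b]`, so `X` may be replaced by the continuous function
obtained by clamping the argument to `[0, b]`. -/

open Finset Set

namespace Matrix

theorem norm_mul_le_card_mul {l m n α : Type*} [Fintype l] [Fintype m] [Fintype n]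
    [NormedRing α] (A : Matrix l m α) (B : Matrix m n α) :
    ‖A * B‖ ≤ Fintype.card m * ‖A‖ * ‖B‖ := by
  refine (norm_le_iff (by positivity)).2 fun i j => ?_
  calc ‖(A * B) i j‖ ≤ ∑ k, ‖A i k‖ * ‖B k j‖ :=
        (norm_sum_le _ _).trans (sum_le_sum fun k _ => norm_mul_le _ _)
    _ ≤ ∑ _k : m, ‖A‖ * ‖B‖ :=
        sum_le_sum fun k _ => mul_le_mul (norm_entry_le_entrywise_sup_norm A)
          (norm_entry_le_entrywise_sup_norm B) (norm_nonneg _) (norm_nonneg _)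
    _ = Fintype.card m * ‖A‖ * ‖B‖ := by simp [mul_assoc]

theorem tsum_mul_tsum_eq_tsum_sum_antidiagonal_of_summable_norm {ι α : Type*} [Fintype ι]
    [NormedRing α] [CompleteSpace α] {f g : ℕ → Matrix ι ι α}
    (hf : Summable fun k => ‖f k‖) (hg : Summable fun k => ‖g k‖) :
    (∑' k, f k) * (∑' k, g k) = ∑' k, ∑ p ∈ antidiagonal k, f p.1 * g p.2 := by
  -- instance search only knows completeness of the product uniformity, which the sup norm induces
  have : @CompleteSpace (Matrix ι ι α) PseudoMetricSpace.toUniformSpace :=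
    inferInstanceAs (CompleteSpace (ι → ι → α))
  have hfg : Summable fun p : ℕ × ℕ => f p.1 * g p.2 :=
    .of_norm_bounded
      ((hf.mul_of_nonneg hg (fun _ => norm_nonneg _) fun _ => norm_nonneg _).mul_left
        (Fintype.card ι : ℝ))
      fun p => (norm_mul_le_card_mul _ _).trans_eq (mul_assoc _ _ _)
  have hf' : Summable f := hf.of_norm
  have hg' : Summable g := hg.of_norm
  exact hf'.tsum_mul_tsum_eq_tsum_sum_antidiagonal hg' hfg

noncomputable def mulCLM (𝕜 ι : Type*) [NontriviallyNormedField 𝕜] [Fintype ι] :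
    Matrix ι ι 𝕜 →L[𝕜] Matrix ι ι 𝕜 →L[𝕜] Matrix ι ι 𝕜 :=
  (LinearMap.mul 𝕜 (Matrix ι ι 𝕜)).mkContinuous₂ (Fintype.card ι) norm_mul_le_card_mul

end Matrix

theorem HasDerivAt.matrix_mul {𝕜 ι : Type*} [NontriviallyNormedField 𝕜] [Fintype ι]
    {u v : 𝕜 → Matrix ι ι 𝕜} {u' v' : Matrix ι ι 𝕜} {x : 𝕜}
    (hu : HasDerivAt u u' x) (hv : HasDerivAt v v' x) :
    HasDerivAt (fun t => u t * v t) (u x * v' + u' * v x) x :=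
  (Matrix.mulCLM 𝕜 ι).hasDerivAt_of_bilinear (fun _ => hu) fun _ => hv

theorem norm_le_mul_pow_div_factorial_of_eq_integral {E : Type*} [NormedAddCommGroup E]
    [NormedSpace ℝ E] {u v : ℕ → ℝ → E} {M K x : ℝ} (hK : 0 ≤ K)
    (hv : ∀ k, Continuous (v k)) (hu : ∀ k t, u (k + 1) t = ∫ s in 0..t, v k s)
    (h0 : ∀ t ∈ Icc 0 x, ‖u 0 t‖ ≤ M) (hvu : ∀ k, ∀ s ∈ Icc 0 x, ‖v k s‖ ≤ K * ‖u k s‖) :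
    ∀ k, ∀ t ∈ Icc 0 x, ‖u k t‖ ≤ M * (K * t) ^ k / k.factorial := by
  intro k
  induction k with
  | zero => simpa using h0
  | succ k ih =>
    intro t ht
    have hpoly : ∀ s : ℝ, K * (M * (K * s) ^ k / k.factorial) =
        M * K ^ (k + 1) / k.factorial * s ^ k := fun s => by ring
    calc ‖u (k + 1) t‖ ≤ ∫ s in 0..t, ‖v k s‖ := by
          rw [hu]; exact intervalIntegral.norm_integral_le_integral_norm ht.1
      _ ≤ ∫ s in 0..t, K * (M * (K * s) ^ k / k.factorial) := by
          refine intervalIntegral.integral_mono_on ht.1 ((hv k).norm.intervalIntegrable _ _)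
            (by simp_rw [hpoly]; exact (continuous_const.mul (continuous_pow k)).intervalIntegrable _ _)
            fun s hs => ?_
          have hs' : s ∈ Icc 0 x := ⟨hs.1, hs.2.trans ht.2⟩
          exact (hvu k s hs').trans (mul_le_mul_of_nonneg_left (ih s hs') hK)
      _ = M * (K * t) ^ (k + 1) / (k + 1).factorial := by
          simp_rw [hpoly, intervalIntegral.integral_const_mul, integral_pow, Nat.factorial_succ]
          push_cast
          field_simp
          ring

theorem summable_norm_of_eq_integral {E : Type*} [NormedAddCommGroup E]
    [NormedSpace ℝ E] {u v : ℕ → ℝ → E} {M K x : ℝ} (hK : 0 ≤ K) (hx : 0 ≤ x)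
    (hv : ∀ k, Continuous (v k)) (hu : ∀ k t, u (k + 1) t = ∫ s in 0..t, v k s)
    (h0 : ∀ t ∈ Icc 0 x, ‖u 0 t‖ ≤ M) (hvu : ∀ k, ∀ s ∈ Icc 0 x, ‖v k s‖ ≤ K * ‖u k s‖) :
    Summable fun k => ‖u k x‖ := by
  have hbound := norm_le_mul_pow_div_factorial_of_eq_integral hK hv hu h0 hvu
  refine .of_nonneg_of_le (fun _ => norm_nonneg _) (fun k => ?_)
    ((Real.summable_pow_div_factorial (K * x)).mul_left M)
  rw [← mul_div_assoc]
  exact hbound k x ⟨hx, le_rfl⟩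

section IntegralSeries

variable {ι : Type*} [Fintype ι] [DecidableEq ι] {Y : ℝ → Matrix ι ι ℝ}

theorem rterm_congr {X : ℝ → Matrix ι ι ℝ} {b : ℝ} (h : EqOn X Y (Icc 0 b)) (k : ℕ) :
    EqOn (rterm X k) (rterm Y k) (Icc 0 b) := by
  induction k with
  | zero => exact fun _ _ => rfl
  | succ k ih =>
    intro x hx
    refine intervalIntegral.integral_congr fun t ht => ?_
    rw [uIcc_of_le hx.1] at ht
    have ht' : t ∈ Icc 0 b := ⟨ht.1, ht.2.trans hx.2⟩
    simp only [ih ht', h ht']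

theorem lterm_congr {X : ℝ → Matrix ι ι ℝ} {b : ℝ} (h : EqOn X Y (Icc 0 b)) (k : ℕ) :
    EqOn (lterm X k) (lterm Y k) (Icc 0 b) := by
  induction k with
  | zero => exact fun _ _ => rfl
  | succ k ih =>
    intro x hx
    refine intervalIntegral.integral_congr fun t ht => ?_
    rw [uIcc_of_le hx.1] at ht
    have ht' : t ∈ Icc 0 b := ⟨ht.1, ht.2.trans hx.2⟩
    simp only [ih ht', h ht']

theorem FS_congr {X : ℝ → Matrix ι ι ℝ} {b : ℝ} (h : EqOn X Y (Icc 0 b)) :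
    EqOn (FS X) (FS Y) (Icc 0 b) :=
  fun _ hx => tsum_congr fun k => rterm_congr h k hx

theorem ES_congr {X : ℝ → Matrix ι ι ℝ} {b : ℝ} (h : EqOn X Y (Icc 0 b)) :
    EqOn (ES X) (ES Y) (Icc 0 b) :=
  fun _ hx => tsum_congr fun k => lterm_congr h k hx

theorem rterm_succ_apply_zero (k : ℕ) : rterm Y (k + 1) 0 = 0 :=
  intervalIntegral.integral_same

theorem lterm_succ_apply_zero (k : ℕ) : lterm Y (k + 1) 0 = 0 :=
  intervalIntegral.integral_same

theorem continuous_rterm (hY : Continuous Y) : ∀ k, Continuous (rterm Y k)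
  | 0 => continuous_const
  | k + 1 => intervalIntegral.continuous_primitive
      (fun _ _ => ((continuous_rterm hY k).matrix_mul hY).intervalIntegrable _ _) 0

theorem continuous_lterm (hY : Continuous Y) : ∀ k, Continuous (lterm Y k)
  | 0 => continuous_const
  | k + 1 => intervalIntegral.continuous_primitive
      (fun _ _ => (hY.matrix_mul (continuous_lterm hY k)).intervalIntegrable _ _) 0

theorem hasDerivAt_rterm_succ (hY : Continuous Y) (k : ℕ) (x : ℝ) :
    HasDerivAt (rterm Y (k + 1)) (rterm Y k x * Y x) x :=
  (((continuous_rterm hY k).matrix_mul hY).integral_hasStrictDerivAt 0 x).hasDerivAt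

theorem hasDerivAt_lterm_succ_s9 (hY : Continuous Y) (k : ℕ) (x : ℝ) :
    HasDerivAt (lterm Y (k + 1)) (Y x * lterm Y k x) x :=
  ((hY.matrix_mul (continuous_lterm hY k)).integral_hasStrictDerivAt 0 x).hasDerivAt

theorem differentiable_rterm (hY : Continuous Y) : ∀ k, Differentiable ℝ (rterm Y k)
  | 0 => differentiable_const _
  | k + 1 => fun x => (hasDerivAt_rterm_succ hY k x).differentiableAt

theorem differentiable_lterm (hY : Continuous Y) : ∀ k, Differentiable ℝ (lterm Y k)
  | 0 => differentiable_const _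
  | k + 1 => fun x => (hasDerivAt_lterm_succ_s9 hY k x).differentiableAt

theorem summable_norm_rterm (hY : Continuous Y) {x : ℝ} (hx : 0 ≤ x) :
    Summable fun k => ‖rterm Y k x‖ := by
  obtain ⟨C, hC⟩ := isCompact_Icc.exists_bound_of_continuousOn hY.continuousOn (s := Icc 0 x)
  have hC0 : 0 ≤ C := (norm_nonneg _).trans (hC 0 ⟨le_rfl, hx⟩)
  refine summable_norm_of_eq_integral (M := ‖(1 : Matrix ι ι ℝ)‖) (mul_nonneg (Nat.cast_nonneg
    (Fintype.card ι)) hC0) hx (fun k => (continuous_rterm hY k).matrix_mul hY) (fun _ _ => rfl)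
    (fun _ _ => le_rfl) fun k s hs => ?_
  calc ‖rterm Y k s * Y s‖ ≤ Fintype.card ι * ‖rterm Y k s‖ * ‖Y s‖ :=
        Matrix.norm_mul_le_card_mul _ _
    _ ≤ Fintype.card ι * ‖rterm Y k s‖ * C := by gcongr; exact hC s hs
    _ = Fintype.card ι * C * ‖rterm Y k s‖ := by ring

theorem summable_norm_lterm (hY : Continuous Y) {x : ℝ} (hx : 0 ≤ x) :
    Summable fun k => ‖lterm Y k x‖ := by
  obtain ⟨C, hC⟩ := isCompact_Icc.exists_bound_of_continuousOn hY.continuousOn (s := Icc 0 x)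
  have hC0 : 0 ≤ C := (norm_nonneg _).trans (hC 0 ⟨le_rfl, hx⟩)
  refine summable_norm_of_eq_integral (M := ‖(1 : Matrix ι ι ℝ)‖) (mul_nonneg (Nat.cast_nonneg
    (Fintype.card ι)) hC0) hx (fun k => hY.matrix_mul (continuous_lterm hY k)) (fun _ _ => rfl)
    (fun _ _ => le_rfl) fun k s hs => ?_
  calc ‖Y s * lterm Y k s‖ ≤ Fintype.card ι * ‖Y s‖ * ‖lterm Y k s‖ :=
        Matrix.norm_mul_le_card_mul _ _
    _ ≤ Fintype.card ι * C * ‖lterm Y k s‖ := by gcongr; exact hC s hs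

theorem sum_antidiagonal_rterm_mul_lterm_neg (hY : Continuous Y) (k : ℕ) (x : ℝ) :
    ∑ p ∈ antidiagonal k, rterm Y p.1 x * lterm (fun t => -Y t) p.2 x =
      if k = 0 then 1 else 0 := by
  have hZ : Continuous fun t => -Y t := hY.neg
  rcases k with _ | k
  · simp [rterm, lterm]
  have hderiv : ∀ x, HasDerivAt
      (fun x => ∑ p ∈ antidiagonal (k + 1), rterm Y p.1 x * lterm (fun t => -Y t) p.2 x) 0 x := by
    intro x
    -- stated with the default `Matrix` instances, so that `hF`, `hE` below rewrite the `deriv`s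
    have hFd : ∀ i, HasDerivAt (rterm Y i) (deriv (rterm Y i) x) x :=
      fun i => (differentiable_rterm hY i x).hasDerivAt
    have hEd : ∀ j, HasDerivAt (lterm (fun t => -Y t) j) (deriv (lterm (fun t => -Y t) j) x) x :=
      fun j => (differentiable_lterm hZ j x).hasDerivAt
    refine (HasDerivAt.fun_sum fun (p : ℕ × ℕ) _ =>
      (hFd p.1).matrix_mul (hEd p.2)).congr_deriv ?_
    rw [sum_add_distrib, Nat.sum_antidiagonal_succ', Nat.sum_antidiagonal_succ]
    have hF : ∀ i, deriv (rterm Y (i + 1)) x = rterm Y i x * Y x :=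
      fun i => (hasDerivAt_rterm_succ hY i x).deriv
    have hE : ∀ j, deriv (lterm (fun t => -Y t) (j + 1)) x = -Y x * lterm (fun t => -Y t) j x :=
      fun j => (hasDerivAt_lterm_succ_s9 hZ j x).deriv
    have hE0 : deriv (lterm (fun t => -Y t) 0) x = 0 := deriv_const x 1
    have hF0 : deriv (rterm Y 0) x = 0 := deriv_const x 1
    dsimp only
    simp only [hF, hE, hE0, hF0, mul_zero, zero_mul, zero_add, ← sum_add_distrib]
    exact sum_eq_zero fun p _ => by rw [neg_mul, mul_neg, mul_assoc, neg_add_cancel]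
  rw [if_neg k.succ_ne_zero]
  calc _ = ∑ p ∈ antidiagonal (k + 1), rterm Y p.1 0 * lterm (fun t => -Y t) p.2 0 :=
        is_const_of_deriv_eq_zero (fun x => (hderiv x).differentiableAt) (fun x => (hderiv x).deriv)
          x 0
    _ = 0 := by
      refine sum_eq_zero fun p hp => ?_
      rcases p with ⟨_ | i, j⟩
      · obtain rfl : j = k + 1 := by simpa using hp
        rw [lterm_succ_apply_zero, mul_zero]
      · rw [rterm_succ_apply_zero, zero_mul]

theorem FS_mul_ES_neg_of_continuous (hY : Continuous Y) {x : ℝ} (hx : 0 ≤ x) :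
    FS Y x * ES (fun t => -Y t) x = 1 := by
  rw [FS, ES, Matrix.tsum_mul_tsum_eq_tsum_sum_antidiagonal_of_summable_norm
    (summable_norm_rterm hY hx) (summable_norm_lterm (Y := fun t => -Y t) hY.neg hx)]
  simp_rw [sum_antidiagonal_rterm_mul_lterm_neg hY]
  exact tsum_ite_eq 0 1

end IntegralSeries

/-- `ℰ(−X)(x)` is the two-sided inverse of `ℱ(X)(x)`. -/
theorem FS_mul_ES_neg {n : ℕ} (b : ℝ) (X : ℝ → Matrix (Fin n) (Fin n) ℝ)
    (hX : ContinuousOn X (Set.Icc 0 b)) :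
    ∀ x ∈ Set.Icc (0:ℝ) b,
      FS X x * ES (fun t => -X t) x = 1 ∧ ES (fun t => -X t) x * FS X x = 1 := by
  intro x hx
  have hb : (0 : ℝ) ≤ b := hx.1.trans hx.2
  set Y : ℝ → Matrix (Fin n) (Fin n) ℝ := fun t => X (projIcc 0 b hb t)
  have hY : Continuous Y :=
    hX.comp_continuous (continuous_subtype_val.comp continuous_projIcc) fun t => (projIcc 0 b hb t).2
  have hXY : EqOn X Y (Icc 0 b) := fun t ht => by simp [Y, projIcc_of_mem hb ht]
  have hFE : FS X x * ES (fun t => -X t) x = 1 := by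
    rw [FS_congr hXY hx, ES_congr (fun t ht => congrArg Neg.neg (hXY ht)) hx]
    exact FS_mul_ES_neg_of_continuous hY hx.1
  exact ⟨hFE, mul_eq_one_comm.mp hFE⟩
end
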